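/- First variation formula for the distance to a compact set, lower curvature bound (Theorem 4.4, curvature ≥ 0 case). Let X be a proper metric space in which every pair of points is joined by a unit-speed shortest path and in which every point has a neighborhood that is a region of curvature ≥ 0. Let K ⊆ X be compact and nonempty, let γ : [0,T] → X (T > 0) be a unit-speed geodesic with γ(0) ∉ K, and write ℓ(t) := Metric.infDist (γ(t)) K. Let ∠_min := inf { ∠⁺(γ, σ) : σ : [0, ℓ(0)] → X a unit-speed geodesic with σ(0) = γ(0) and σ(ℓ(0)) ∈ K } (this set of shortest paths from γ(0) to K is nonempty since X is proper and geodesic and K is compact, and the angles exist by Lemma 3.1, so ∠⁺ may be used). Then lim_{t→0⁺} (ℓ(t) − ℓ(0))/t = −cos(∠_min), i.e. Filter.Tendsto (fun t => (ℓ(t) − ℓ(0))/t) (𝓝[>] 0) (𝓝 (−Real.cos ∠_min)). -/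

import Mathlib

open Filter Topology Metric Set

noncomputable section

/-- `γ` is a unit-speed geodesic (shortest path) on the interval `[0, T]`:
the distance between any two of its points equals the parameter difference. -/
def IsUnitSpeedGeodesicOn {X : Type*} [MetricSpace X] (γ : ℝ → X) (T : ℝ) : Prop :=
  ∀ t ∈ Set.Icc (0:ℝ) T, ∀ t' ∈ Set.Icc (0:ℝ) T, dist (γ t) (γ t') = |t - t'|

/-- The Euclidean comparison angle `∠⁰_p(x, y)` at the vertex `p`. -/
def compAngle {X : Type*} [MetricSpace X] (p x y : X) : ℝ :=
  Real.arccos ((dist p x ^ 2 + dist p y ^ 2 - dist x y ^ 2) /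
    (2 * dist p x * dist p y))

/-- The upper angle `∠⁺(γ, η)` between two geodesics with `γ 0 = η 0`:
the limsup of comparison angles `∠⁰_{γ 0}(γ t, η s)` as `(t, s) → (0⁺, 0⁺)`. -/
def upperAngle {X : Type*} [MetricSpace X] (γ η : ℝ → X) : ℝ :=
  Filter.limsup (fun ts : ℝ × ℝ => compAngle (γ 0) (γ ts.1) (η ts.2))
    ((𝓝[>] (0:ℝ)) ×ˢ (𝓝[>] (0:ℝ)))

/-- The lower angle `∠⁻(γ, η)`: liminf of comparison angles. -/
def lowerAngle {X : Type*} [MetricSpace X] (γ η : ℝ → X) : ℝ :=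
  Filter.liminf (fun ts : ℝ × ℝ => compAngle (γ 0) (γ ts.1) (η ts.2))
    ((𝓝[>] (0:ℝ)) ×ˢ (𝓝[>] (0:ℝ)))

/-- `U` is a region of curvature bounded by `0` in the comparison sense, where
`rel` is `≤` (curvature `≤ 0`) or `≥` (curvature `≥ 0`): any two points of `U`
are joined by a unit-speed shortest path with image in `U`, and for every
geodesic triangle contained in `U` and every Euclidean comparison triangle,
distances between pairs of points on the sides are related by `rel` to the
distances between the corresponding comparison points. -/
def IsCurvRegion {X : Type*} [MetricSpace X] (rel : ℝ → ℝ → Prop) (U : Set X) : Prop :=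
  (∀ x ∈ U, ∀ y ∈ U, ∃ γ : ℝ → X, IsUnitSpeedGeodesicOn γ (dist x y) ∧
    γ 0 = x ∧ γ (dist x y) = y ∧ ∀ t ∈ Set.Icc (0:ℝ) (dist x y), γ t ∈ U) ∧
  (∀ x ∈ U, ∀ y ∈ U, ∀ z ∈ U, ∀ p : Fin 3 → ℝ → X,
    (∀ i, IsUnitSpeedGeodesicOn (p i) (![dist x y, dist x z, dist y z] i) ∧
      p i 0 = (![(x, y), (x, z), (y, z)] i).1 ∧
      p i (![dist x y, dist x z, dist y z] i) = (![(x, y), (x, z), (y, z)] i).2 ∧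
      ∀ t ∈ Set.Icc (0:ℝ) (![dist x y, dist x z, dist y z] i), p i t ∈ U) →
    ∀ xb yb zb : EuclideanSpace ℝ (Fin 2),
      dist xb yb = dist x y → dist xb zb = dist x z → dist yb zb = dist y z →
      ∀ i j : Fin 3, ∀ a b : ℝ,
        a ∈ Set.Icc (0:ℝ) (![dist x y, dist x z, dist y z] i) →
        b ∈ Set.Icc (0:ℝ) (![dist x y, dist x z, dist y z] j) →
        rel (dist (p i a) (p j b))
          (dist
            (![fun c : ℝ => AffineMap.lineMap xb yb (c / dist x y),
               fun c : ℝ => AffineMap.lineMap xb zb (c / dist x z),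
               fun c : ℝ => AffineMap.lineMap yb zb (c / dist y z)] i a)
            (![fun c : ℝ => AffineMap.lineMap xb yb (c / dist x y),
               fun c : ℝ => AffineMap.lineMap xb zb (c / dist x z),
               fun c : ℝ => AffineMap.lineMap yb zb (c / dist y z)] j b)))

/-- A region of curvature `≤ 0`. -/
def IsCurvLeRegion {X : Type*} [MetricSpace X] (U : Set X) : Prop :=
  IsCurvRegion (· ≤ ·) U

/-- A region of curvature `≥ 0`. -/
def IsCurvGeRegion {X : Type*} [MetricSpace X] (U : Set X) : Prop :=
  IsCurvRegion (· ≥ ·) U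

/-!
The upper bound needs no curvature. For a shortest path `σ` from `γ 0` to `K`, the triangle
inequality through `σ u` and the law of cosines for the comparison angle at `γ 0` give
`ℓ t - ℓ 0 ≤ -t cos ∠⁰(γ t, σ u) + t² / u`; at small scales these comparison angles are almost
`≤ ∠⁺(γ, σ)`.

For the lower bound take, at each `γ s`, a shortest path `σ_s` to `K`. Curvature `≥ 0`, in the form
of Stewart's inequality, makes the cosines of the two comparison angles at `γ s` between `σ_s` and
the two halves of `γ` sum to `≥ 0`, so the same estimate run backwards along `γ` bounds the left
slopes of `ℓ` at `s` by `cos ∠⁰(γ (s + t), σ_s u)`. By compactness these angles are eventually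
almost `≥ ∠_min`, since a limit of the `σ_s` is a shortest path from `γ 0` to `K`; integrating the
slope bound over `[0, s]` gives `ℓ s - ℓ 0 ≥ -s (cos ∠_min + ε)`.
-/

open Real

lemma cos_sub_le_cos_of_le_add {α θ δ : ℝ} (hθ : 0 ≤ θ) (hα : α ≤ π) (hδ : 0 ≤ δ)
    (h : θ ≤ α + δ) : cos α - δ ≤ cos θ := by
  rcases le_total θ α with hθα | hαθ
  · linarith [cos_le_cos_of_nonneg_of_le_pi hθ hα hθα]
  · linarith [(abs_le.1 (abs_cos_sub_cos_le θ α)).1, abs_of_nonneg (sub_nonneg.2 hαθ)]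

lemma sub_le_mul_of_forall_eventually_sub_le {f : ℝ → ℝ} {a b C : ℝ} (hab : a ≤ b)
    (hf : ContinuousOn f (Icc a b))
    (hslope : ∀ x ∈ Ioc a b, ∀ᶠ h in 𝓝[>] 0, f (x - h) - f x ≤ C * h) :
    f a - f b ≤ C * (b - a) := by
  have hg : ContinuousOn (fun y => f (b - y)) (Icc 0 (b - a)) :=
    hf.comp (continuous_sub_left b).continuousOn fun y hy =>
      ⟨by linarith [hy.2], by linarith [hy.1]⟩
  have key := image_le_of_liminf_slope_right_le_deriv_boundary hg (B := fun y => f b + C * y)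
    (B' := fun _ => C) (by simp) (by fun_prop)
    (fun y _ => by simpa using ((hasDerivWithinAt_id y (Ici y)).const_mul C).const_add (f b))
    (fun y hy r hr => Eventually.frequently ?_) (right_mem_Icc.2 (sub_nonneg.2 hab))
  · simp only [sub_sub_cancel] at key
    linarith
  have hshift : Tendsto (fun z => z - y) (𝓝[>] y) (𝓝[>] 0) :=
    tendsto_nhdsWithin_of_tendsto_nhds_of_eventually_within _
      (by simpa using ((continuous_sub_right y).tendsto y).mono_left nhdsWithin_le_nhds)
      (eventually_nhdsWithin_of_forall fun z hz => mem_Ioi.2 (sub_pos.2 hz))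
  filter_upwards [hshift.eventually (hslope (b - y) ⟨by linarith [hy.2], by linarith [hy.1]⟩),
    self_mem_nhdsWithin] with z hz hzy
  rw [sub_sub_sub_cancel_right] at hz
  rw [slope_def_field, div_lt_iff₀ (sub_pos.2 hzy)]
  linarith [mul_lt_mul_of_pos_right hr (sub_pos.2 hzy)]

lemma EuclideanSpace.dist_sq_fin_two (a b : EuclideanSpace ℝ (Fin 2)) :
    dist a b ^ 2 = (a 0 - b 0) ^ 2 + (a 1 - b 1) ^ 2 := by
  rw [EuclideanSpace.dist_eq, sq_sqrt (by positivity), Fin.sum_univ_two, Real.dist_eq,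
    Real.dist_eq, sq_abs, sq_abs]

lemma exists_comparison_triangle {d₁ d₂ d₃ : ℝ} (h₁ : 0 < d₁)
    (t₁ : d₂ ≤ d₁ + d₃) (t₂ : d₃ ≤ d₁ + d₂) (t₃ : d₁ ≤ d₂ + d₃) :
    ∃ xb yb zb : EuclideanSpace ℝ (Fin 2),
      dist xb yb = d₁ ∧ dist xb zb = d₂ ∧ dist yb zb = d₃ ∧
      ∀ r : ℝ, dist (AffineMap.lineMap xb yb r) zb ^ 2 =
        (1 - r) * d₂ ^ 2 + r * d₃ ^ 2 - r * (1 - r) * d₁ ^ 2 := by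
  set zx := (d₁ ^ 2 + d₂ ^ 2 - d₃ ^ 2) / (2 * d₁)
  have hzx : 2 * d₁ * zx = d₁ ^ 2 + d₂ ^ 2 - d₃ ^ 2 := by simp only [zx]; field_simp
  have hzx_sq : zx ^ 2 ≤ d₂ ^ 2 := by
    refine sq_le_sq' ?_ ?_ <;> simp only [zx]
    · rw [le_div_iff₀ (by positivity)]; nlinarith
    · rw [div_le_iff₀ (by positivity)]; nlinarith
  set zy := √(d₂ ^ 2 - zx ^ 2)
  have hzy : zy ^ 2 = d₂ ^ 2 - zx ^ 2 := sq_sqrt (by linarith)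
  have hdist : ∀ {a b : EuclideanSpace ℝ (Fin 2)} {d : ℝ}, 0 ≤ d → dist a b ^ 2 = d ^ 2 →
      dist a b = d := fun hd h => (sq_eq_sq₀ dist_nonneg hd).1 h
  refine ⟨!₂[0, 0], !₂[d₁, 0], !₂[zx, zy], hdist h₁.le ?_, hdist (by linarith) ?_,
    hdist (by linarith) ?_, fun r => ?_⟩ <;>
  simp only [EuclideanSpace.dist_sq_fin_two, AffineMap.lineMap_apply_module, PiLp.add_apply,
    PiLp.smul_apply, smul_eq_mul, Matrix.cons_val_zero, Matrix.cons_val_one]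
  · ring
  · linear_combination hzy
  · linear_combination hzy - hzx
  · linear_combination hzy - r * hzx

section ComparisonAngle

variable {X : Type*} [MetricSpace X]

lemma compAngle_nonneg (p x y : X) : 0 ≤ compAngle p x y := arccos_nonneg _

lemma compAngle_le_pi (p x y : X) : compAngle p x y ≤ π := arccos_le_pi _

lemma cos_compAngle {p x y : X} (hx : 0 < dist p x) (hy : 0 < dist p y) :
    cos (compAngle p x y) =
      (dist p x ^ 2 + dist p y ^ 2 - dist x y ^ 2) / (2 * dist p x * dist p y) := by
  have h₁ := dist_triangle_left x y p
  have h₂ := dist_triangle p x y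
  have h₃ := dist_triangle_right p x y
  have h₄ : 0 ≤ dist x y := dist_nonneg
  apply cos_arccos
  · rw [le_div_iff₀ (by positivity)]; nlinarith
  · rw [div_le_one (by positivity)]; nlinarith

/-- With `t = dist p x`, `u = dist p y`, `θ = compAngle p x y`, the law of cosines shows that the
square of the right side exceeds `dist x y ^ 2` by `t² (1 + (cos θ - t / u)²)`. -/
lemma dist_le_of_compAngle {p x y : X} (hx : 0 < dist p x) (hy : 0 < dist p y) :
    dist x y ≤ dist p y - dist p x * cos (compAngle p x y) + dist p x ^ 2 / dist p y := by
  have hcos := cos_compAngle hx hy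
  have hle := cos_le_one (compAngle p x y)
  set t := dist p x
  set u := dist p y
  set c := cos (compAngle p x y)
  have hlaw : dist x y ^ 2 = t ^ 2 + u ^ 2 - 2 * t * u * c := by
    rw [hcos]; field_simp; ring
  have hrhs : 0 ≤ u - t * c + t ^ 2 / u := by
    have : 0 ≤ u - t + t ^ 2 / u := by
      rw [show u - t + t ^ 2 / u = ((u - t) ^ 2 + u * t) / u by field_simp; ring]
      positivity
    nlinarith
  refine le_of_pow_le_pow_left₀ two_ne_zero hrhs ?_
  have hsq : (u - t * c + t ^ 2 / u) ^ 2 - dist x y ^ 2 = t ^ 2 * (1 + (c - t / u) ^ 2) := by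
    rw [hlaw]; field_simp; ring
  nlinarith [sq_nonneg t, sq_nonneg (c - t / u)]

end ComparisonAngle

namespace IsUnitSpeedGeodesicOn

variable {X : Type*} [MetricSpace X] {γ : ℝ → X} {T : ℝ}

lemma dist_eq_sub (hγ : IsUnitSpeedGeodesicOn γ T) {a b : ℝ} (ha : 0 ≤ a) (hab : a ≤ b)
    (hb : b ≤ T) : dist (γ a) (γ b) = b - a := by
  rw [hγ a ⟨ha, hab.trans hb⟩ b ⟨ha.trans hab, hb⟩, abs_sub_comm, abs_of_nonneg (by linarith)]

lemma dist_zero_eq (hγ : IsUnitSpeedGeodesicOn γ T) {t : ℝ} (ht : 0 ≤ t) (htT : t ≤ T) :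
    dist (γ 0) (γ t) = t := by
  simpa using hγ.dist_eq_sub le_rfl ht htT

lemma comp_add (hγ : IsUnitSpeedGeodesicOn γ T) {a L : ℝ} (ha : 0 ≤ a) (haL : a + L ≤ T) :
    IsUnitSpeedGeodesicOn (fun c => γ (a + c)) L := by
  intro c hc c' hc'
  rw [hγ (a + c) ⟨by linarith [hc.1], by linarith [hc.2]⟩ (a + c')
    ⟨by linarith [hc'.1], by linarith [hc'.2]⟩, add_sub_add_left_eq_sub]

lemma tendsto_add_nhdsGT (hγ : IsUnitSpeedGeodesicOn γ T) {t : ℝ} (ht : 0 ≤ t) (htT : t < T) :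
    Tendsto (fun s => γ (s + t)) (𝓝[>] 0) (𝓝 (γ t)) := by
  rw [Metric.tendsto_nhds]
  intro ε hε
  filter_upwards [Ioo_mem_nhdsGT (lt_min hε (sub_pos.2 htT))] with s hs
  rw [dist_comm,
    hγ.dist_eq_sub ht (by linarith [hs.1]) (by linarith [hs.2, min_le_right ε (T - t)])]
  linarith [hs.2, min_le_left ε (T - t)]

lemma continuousOn (hγ : IsUnitSpeedGeodesicOn γ T) : ContinuousOn γ (Icc 0 T) :=
  (LipschitzOnWith.of_dist_le_mul (K := 1) fun a ha b hb => by
    rw [hγ a ha b hb, Real.dist_eq]; simp).continuousOn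

end IsUnitSpeedGeodesicOn

section UpperAngle

variable {X : Type*} [MetricSpace X]

lemma isBoundedUnder_le_compAngle (γ η : ℝ → X) (l : Filter (ℝ × ℝ)) :
    IsBoundedUnder (· ≤ ·) l fun ts => compAngle (γ 0) (γ ts.1) (η ts.2) :=
  isBoundedUnder_of ⟨π, fun _ => compAngle_le_pi _ _ _⟩

lemma isBoundedUnder_ge_compAngle (γ η : ℝ → X) (l : Filter (ℝ × ℝ)) :
    IsBoundedUnder (· ≥ ·) l fun ts => compAngle (γ 0) (γ ts.1) (η ts.2) :=
  isBoundedUnder_of ⟨0, fun _ => compAngle_nonneg _ _ _⟩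

lemma upperAngle_nonneg (γ η : ℝ → X) : 0 ≤ upperAngle γ η :=
  le_limsup_of_frequently_le (.of_forall fun _ => compAngle_nonneg _ _ _)
    (isBoundedUnder_le_compAngle γ η _)

lemma upperAngle_le_pi (γ η : ℝ → X) : upperAngle γ η ≤ π :=
  limsup_le_of_le (isBoundedUnder_ge_compAngle γ η _).isCoboundedUnder_le
    (.of_forall fun _ => compAngle_le_pi _ _ _)

lemma upperAngle_le_of_forall_compAngle_le {γ η : ℝ → X} {ρ c : ℝ} (hρ : 0 < ρ)
    (h : ∀ t ∈ Ioo 0 ρ, ∀ s ∈ Ioo 0 ρ, compAngle (γ 0) (γ t) (η s) ≤ c) :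
    upperAngle γ η ≤ c := by
  refine limsup_le_of_le (isBoundedUnder_ge_compAngle γ η _).isCoboundedUnder_le ?_
  filter_upwards [prod_mem_prod (Ioo_mem_nhdsGT hρ) (Ioo_mem_nhdsGT hρ)] with ts hts
  exact h _ hts.1 _ hts.2

lemma exists_forall_eventually_compAngle_lt {γ η : ℝ → X} {c ρ : ℝ} (hc : upperAngle γ η < c)
    (hρ : 0 < ρ) : ∃ u ∈ Ioo 0 ρ, ∀ᶠ t in 𝓝[>] 0, compAngle (γ 0) (γ t) (η u) < c := by
  have h := eventually_swap_iff.1 <|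
    eventually_lt_of_limsup_lt hc (isBoundedUnder_le_compAngle γ η _)
  exact (h.curry.and (Ioo_mem_nhdsGT hρ)).exists.imp fun u hu => ⟨hu.2, hu.1⟩

end UpperAngle

section Limits

variable {X : Type*} [MetricSpace X]

lemma Filter.Tendsto.compAngle {ι : Type*} {l : Filter ι} {p x y : ι → X} {p₀ x₀ y₀ : X}
    (hp : Tendsto p l (𝓝 p₀)) (hx : Tendsto x l (𝓝 x₀)) (hy : Tendsto y l (𝓝 y₀))
    (hx₀ : dist p₀ x₀ ≠ 0) (hy₀ : dist p₀ y₀ ≠ 0) :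
    Tendsto (fun i => compAngle (p i) (x i) (y i)) l (𝓝 (compAngle p₀ x₀ y₀)) :=
  (continuous_arccos.tendsto _).comp <|
    ((((hp.dist hx).pow 2).add ((hp.dist hy).pow 2)).sub ((hx.dist hy).pow 2)).div
      ((tendsto_const_nhds.mul (hp.dist hx)).mul (hp.dist hy))
      (mul_ne_zero (mul_ne_zero two_ne_zero hx₀) hy₀)

lemma Ultrafilter.exists_tendsto_of_eventually_mem_closedBall [ProperSpace X] {ι : Type*}
    (F : Ultrafilter ι) {f : ι → X} {x : X} {r : ℝ} (h : ∀ᶠ i in F, f i ∈ closedBall x r) :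
    ∃ y, Tendsto f F (𝓝 y) :=
  let ⟨y, _, hy⟩ := (isCompact_closedBall x r).ultrafilter_le_nhds (F.map f) (le_principal_iff.2 h)
  ⟨y, hy⟩

lemma exists_isUnitSpeedGeodesicOn_tendsto [ProperSpace X] {ι : Type*} (F : Ultrafilter ι)
    {σ : ι → ℝ → X} {len : ι → ℝ} {L : ℝ} {x : X}
    (hσ : ∀ i, IsUnitSpeedGeodesicOn (σ i) (len i)) (hlen₀ : ∀ i, 0 ≤ len i)
    (hlen : Tendsto len F (𝓝 L)) (hx : Tendsto (fun i => σ i 0) F (𝓝 x)) :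
    ∃ τ : ℝ → X, IsUnitSpeedGeodesicOn τ L ∧ ∀ u ∈ Icc 0 L, ∀ v : ι → ℝ,
      (∀ᶠ i in F, v i ∈ Icc 0 (len i)) → Tendsto v F (𝓝 u) →
        Tendsto (fun i => σ i (v i)) F (𝓝 (τ u)) := by
  have hclamp : ∀ u ∈ Icc 0 L, ∃ v : ι → ℝ, (∀ i, v i ∈ Icc 0 (len i)) ∧ Tendsto v F (𝓝 u) := by
    intro u hu
    refine ⟨fun i => max 0 (min u (len i)),
      fun i => ⟨le_max_left _ _, max_le (hlen₀ i) (min_le_right _ _)⟩, ?_⟩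
    have h := (tendsto_const_nhds (x := (0 : ℝ))).max ((tendsto_const_nhds (x := u)).min hlen)
    rwa [min_eq_left hu.2, max_eq_right hu.1] at h
  have hdist : ∀ {u u' : ℝ} {v w : ι → ℝ}, (∀ᶠ i in F, v i ∈ Icc 0 (len i)) →
      (∀ᶠ i in F, w i ∈ Icc 0 (len i)) → Tendsto v F (𝓝 u) → Tendsto w F (𝓝 u') →
      Tendsto (fun i => dist (σ i (v i)) (σ i (w i))) F (𝓝 |u - u'|) := by
    intro u u' v w hv hw hvu hwu
    refine ((hvu.sub hwu).abs).congr' ?_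
    filter_upwards [hv, hw] with i hvi hwi
    exact ((hσ i) _ hvi _ hwi).symm
  have hconv : ∀ v : ι → ℝ, (∀ᶠ i in F, v i ∈ Icc 0 (len i)) →
      ∃ y, Tendsto (fun i => σ i (v i)) F (𝓝 y) := by
    intro v hv
    refine F.exists_tendsto_of_eventually_mem_closedBall (x := x) (r := L + 2) ?_
    filter_upwards [hv, hlen.eventually (eventually_le_nhds (lt_add_one L)),
      hx.eventually (ball_mem_nhds x one_pos)] with i hvi hli hxi
    calc dist (σ i (v i)) x ≤ dist (σ i 0) (σ i (v i)) + dist (σ i 0) x :=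
          dist_triangle_left _ _ _
      _ ≤ L + 2 := by
        rw [(hσ i).dist_zero_eq hvi.1 hvi.2]; linarith [hvi.2, mem_ball.1 hxi]
  have hlim : ∀ u ∈ Icc 0 L, ∃ y, ∀ v : ι → ℝ, (∀ᶠ i in F, v i ∈ Icc 0 (len i)) →
      Tendsto v F (𝓝 u) → Tendsto (fun i => σ i (v i)) F (𝓝 y) := by
    intro u hu
    obtain ⟨v₀, hv₀, hv₀u⟩ := hclamp u hu
    obtain ⟨y, hy⟩ := hconv v₀ (.of_forall hv₀)
    refine ⟨y, fun v hv hvu => hy.congr_dist ?_⟩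
    simpa using hdist (.of_forall hv₀) hv hv₀u hvu
  have : Nonempty X := ⟨x⟩
  choose! τ hτ using hlim
  refine ⟨τ, fun u hu u' hu' => ?_, hτ⟩
  obtain ⟨v, hv, hvu⟩ := hclamp u hu
  obtain ⟨w, hw, hwu⟩ := hclamp u' hu'
  exact tendsto_nhds_unique ((hτ u hu v (.of_forall hv) hvu).dist (hτ u' hu' w (.of_forall hw) hwu))
    (hdist (.of_forall hv) (.of_forall hw) hvu hwu)

end Limits

section GeodesicToSet

variable {X : Type*} [MetricSpace X]

def IsGeodesicToSet (σ : ℝ → X) (x : X) (K : Set X) : Prop :=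
  IsUnitSpeedGeodesicOn σ (infDist x K) ∧ σ 0 = x ∧ σ (infDist x K) ∈ K

lemma exists_isGeodesicToSet
    (hgeo : ∀ x y : X, ∃ γ : ℝ → X, IsUnitSpeedGeodesicOn γ (dist x y) ∧ γ 0 = x ∧ γ (dist x y) = y)
    {K : Set X} (hK : IsCompact K) (hKne : K.Nonempty) (x : X) :
    ∃ σ, IsGeodesicToSet σ x K := by
  obtain ⟨y, hyK, hxy⟩ := hK.exists_infDist_eq_dist hKne x
  obtain ⟨σ, hσ, hσ0, hσy⟩ := hgeo x y
  refine ⟨σ, ?_, hσ0, ?_⟩ <;> rw [hxy]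
  exacts [hσ, hσy.symm ▸ hyK]

namespace IsGeodesicToSet

variable {σ : ℝ → X} {x : X} {K : Set X}

lemma dist_eq (hσ : IsGeodesicToSet σ x K) {u : ℝ} (hu : 0 ≤ u) (huL : u ≤ infDist x K) :
    dist x (σ u) = u := by
  rw [← hσ.2.1]; exact hσ.1.dist_zero_eq hu huL

lemma infDist_le (hσ : IsGeodesicToSet σ x K) (y : X) {u : ℝ} (hu : 0 ≤ u)
    (huL : u ≤ infDist x K) : infDist y K ≤ dist y (σ u) + (infDist x K - u) :=
  calc infDist y K ≤ dist y (σ (infDist x K)) := infDist_le_dist_of_mem hσ.2.2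
    _ ≤ dist y (σ u) + dist (σ u) (σ (infDist x K)) := dist_triangle _ _ _
    _ = dist y (σ u) + (infDist x K - u) := by rw [hσ.1.dist_eq_sub hu huL le_rfl]

lemma infDist_sub_infDist_le (hσ : IsGeodesicToSet σ x K) {y : X} {u : ℝ} (hu : 0 < u)
    (huL : u ≤ infDist x K) (hy : 0 < dist x y) :
    infDist y K - infDist x K ≤
      -(dist x y * cos (compAngle x y (σ u))) + dist x y ^ 2 / u := by
  have hxσ := hσ.dist_eq hu.le huL
  have h := dist_le_of_compAngle hy (hxσ.symm ▸ hu)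
  rw [hxσ] at h
  linarith [hσ.infDist_le y hu.le huL, dist_comm y (σ u)]

lemma eventually_slope_lt {γ : ℝ → X} {T : ℝ} (hγ : IsUnitSpeedGeodesicOn γ T) (hT : 0 < T)
    (hσ : IsGeodesicToSet σ (γ 0) K) (hL : 0 < infDist (γ 0) K) {b : ℝ}
    (hb : -cos (upperAngle γ σ) < b) :
    ∀ᶠ t in 𝓝[>] 0, (infDist (γ t) K - infDist (γ 0) K) / t < b := by
  set α := upperAngle γ σ
  set ε := b + cos α
  have hε : 0 < ε := by simp only [ε]; linarith
  obtain ⟨u, hu, hθ⟩ := exists_forall_eventually_compAngle_lt (γ := γ) (η := σ) (c := α + ε / 2)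
    (by linarith) hL
  filter_upwards [hθ, Ioo_mem_nhdsGT (lt_min hT (half_pos (mul_pos hε hu.1)))] with t hθt ht
  have htT : t < T := ht.2.trans_le (min_le_left _ _)
  have htε : t < ε * u / 2 := ht.2.trans_le (min_le_right _ _)
  have hdt : dist (γ 0) (γ t) = t := hγ.dist_zero_eq ht.1.le htT.le
  have hslope := hσ.infDist_sub_infDist_le hu.1 hu.2.le (hdt ▸ ht.1)
  have hcos := cos_sub_le_cos_of_le_add (compAngle_nonneg _ _ _) (upperAngle_le_pi γ σ)
    (by positivity) hθt.le
  have hsq : t ^ 2 / u < t * (ε / 2) := by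
    rw [div_lt_iff₀ hu.1]; nlinarith [ht.1]
  rw [hdt] at hslope
  rw [div_lt_iff₀ ht.1]
  nlinarith [ht.1]

end IsGeodesicToSet

def minUpperAngle (γ : ℝ → X) (K : Set X) : ℝ :=
  sInf (upperAngle γ '' {σ | IsGeodesicToSet σ (γ 0) K})

lemma minUpperAngle_nonneg (γ : ℝ → X) (K : Set X) : 0 ≤ minUpperAngle γ K :=
  Real.sInf_nonneg <| by rintro _ ⟨σ, -, rfl⟩; exact upperAngle_nonneg γ σ

lemma minUpperAngle_le_upperAngle {γ σ : ℝ → X} {K : Set X} (hσ : IsGeodesicToSet σ (γ 0) K) :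
    minUpperAngle γ K ≤ upperAngle γ σ :=
  csInf_le ⟨0, by rintro _ ⟨σ, -, rfl⟩; exact upperAngle_nonneg γ σ⟩ (mem_image_of_mem _ hσ)

lemma exists_upperAngle_lt {γ : ℝ → X} {K : Set X} (hne : ∃ σ, IsGeodesicToSet σ (γ 0) K)
    {c : ℝ} (hc : minUpperAngle γ K < c) : ∃ σ, IsGeodesicToSet σ (γ 0) K ∧ upperAngle γ σ < c := by
  obtain ⟨_, ⟨σ, hσ, rfl⟩, hlt⟩ := exists_lt_of_csInf_lt
    (Set.Nonempty.image (upperAngle γ) (s := {σ | IsGeodesicToSet σ (γ 0) K}) hne) hc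
  exact ⟨σ, hσ, hlt⟩

lemma eventually_slope_lt_of_neg_cos_minUpperAngle_lt {γ : ℝ → X} {K : Set X} {T : ℝ}
    (hγ : IsUnitSpeedGeodesicOn γ T) (hT : 0 < T) (hL : 0 < infDist (γ 0) K)
    (hne : ∃ σ, IsGeodesicToSet σ (γ 0) K) {b : ℝ} (hb : -cos (minUpperAngle γ K) < b) :
    ∀ᶠ t in 𝓝[>] 0, (infDist (γ t) K - infDist (γ 0) K) / t < b := by
  set m := minUpperAngle γ K
  obtain ⟨σ, hσ, hσm⟩ := exists_upperAngle_lt hne (c := m + (b + cos m) / 2) (by linarith)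
  refine hσ.eventually_slope_lt hγ hT hL ?_
  have := cos_sub_le_cos_of_le_add (upperAngle_nonneg γ σ)
    ((minUpperAngle_le_upperAngle hσ).trans (upperAngle_le_pi γ σ)) (by linarith) hσm.le
  linarith

end GeodesicToSet

section Curvature

variable {X : Type*} [MetricSpace X] {U : Set X}

/-- Stewart's theorem, which holds with equality in the Euclidean plane, becomes an inequality
in a region of curvature `≥ 0`. -/
lemma IsCurvGeRegion.stewart_le (hU : IsCurvGeRegion U) {x y z : X} (hx : x ∈ U) (hy : y ∈ U)
    (hz : z ∈ U) {c : ℝ → X} (hc : IsUnitSpeedGeodesicOn c (dist x y)) (hc0 : c 0 = x)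
    (hc1 : c (dist x y) = y) (hcU : ∀ r ∈ Icc 0 (dist x y), c r ∈ U) (hxy : 0 < dist x y)
    {a : ℝ} (ha : a ∈ Icc 0 (dist x y)) :
    a * dist y z ^ 2 + (dist x y - a) * dist x z ^ 2 ≤
      dist x y * (dist (c a) z ^ 2 + a * (dist x y - a)) := by
  obtain ⟨c₁, hc₁, hc₁0, hc₁1, hc₁U⟩ := hU.1 x hx z hz
  obtain ⟨c₂, hc₂, hc₂0, hc₂1, hc₂U⟩ := hU.1 y hy z hz
  obtain ⟨xb, yb, zb, hxyb, hxzb, hyzb, hstewart⟩ := exists_comparison_triangle hxy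
    (dist_triangle x y z) (dist_triangle_left y z x) (dist_triangle_right x y z)
  have hcomp := hU.2 x hx y hy z hz ![c, c₁, c₂]
    (fun i => by
      fin_cases i
      exacts [⟨hc, hc0, hc1, hcU⟩, ⟨hc₁, hc₁0, hc₁1, hc₁U⟩, ⟨hc₂, hc₂0, hc₂1, hc₂U⟩])
    xb yb zb hxyb hxzb hyzb 0 1 a (dist x z)
    (by simpa using ha) (by simp)
  have hzb : AffineMap.lineMap xb zb (dist x z / dist x z) = zb := by
    rcases eq_or_ne (dist x z) 0 with h | h
    · rw [dist_eq_zero.1 (hxzb.trans h), AffineMap.lineMap_same_apply]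
    · rw [div_self h, AffineMap.lineMap_apply_one]
  simp only [Matrix.cons_val_zero, Matrix.cons_val_one, hc₁1, hzb] at hcomp
  have hsq := pow_le_pow_left₀ dist_nonneg hcomp 2
  rw [hstewart] at hsq
  have hexpand : dist x y * ((1 - a / dist x y) * dist x z ^ 2 + a / dist x y * dist y z ^ 2 -
      a / dist x y * (1 - a / dist x y) * dist x y ^ 2) =
      a * dist y z ^ 2 + (dist x y - a) * dist x z ^ 2 - a * (dist x y - a) * dist x y := by
    field_simp; ring
  nlinarith [mul_le_mul_of_nonneg_left hsq hxy.le]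

lemma IsCurvGeRegion.cos_compAngle_add_cos_compAngle_nonneg (hU : IsCurvGeRegion U)
    {γ : ℝ → X} {T : ℝ} (hγ : IsUnitSpeedGeodesicOn γ T) {a b c : ℝ} (ha : 0 ≤ a) (hab : a < b)
    (hbc : b < c) (hcT : c ≤ T) (hγU : ∀ r ∈ Icc a c, γ r ∈ U) {z : X} (hz : z ∈ U)
    (hbz : 0 < dist (γ b) z) :
    0 ≤ cos (compAngle (γ b) (γ a) z) + cos (compAngle (γ b) (γ c) z) := by
  have hac : dist (γ a) (γ c) = c - a := hγ.dist_eq_sub ha (hab.trans hbc).le hcT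
  have hba : dist (γ b) (γ a) = b - a := by
    rw [dist_comm]; exact hγ.dist_eq_sub ha hab.le (hbc.le.trans hcT)
  have hbc' : dist (γ b) (γ c) = c - b := hγ.dist_eq_sub (ha.trans hab.le) hbc.le hcT
  have hstewart := hU.stewart_le (hγU a ⟨le_rfl, by linarith⟩) (hγU c ⟨by linarith, le_rfl⟩) hz
    (c := fun r => γ (a + r)) (hac ▸ hγ.comp_add ha (by linarith)) (by simp)
    (by rw [hac, add_sub_cancel]) (fun r hr => hγU _ ⟨by linarith [hr.1], by linarith [hr.2, hac]⟩)
    (by rw [hac]; linarith) (a := b - a) (by rw [hac]; constructor <;> linarith)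
  simp only [add_sub_cancel, hac, sub_sub_sub_cancel_right] at hstewart
  rw [cos_compAngle (hba ▸ sub_pos.2 hab) hbz, cos_compAngle (hbc' ▸ sub_pos.2 hbc) hbz, hba, hbc']
  set u := dist (γ b) z
  have hsum : ((b - a) ^ 2 + u ^ 2 - dist (γ a) z ^ 2) / (2 * (b - a) * u) +
      ((c - b) ^ 2 + u ^ 2 - dist (γ c) z ^ 2) / (2 * (c - b) * u) =
      ((c - a) * (u ^ 2 + (b - a) * (c - b)) -
        ((b - a) * dist (γ c) z ^ 2 + (c - b) * dist (γ a) z ^ 2)) /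
        (2 * (b - a) * (c - b) * u) := by
    have := sub_pos.2 hab; have := sub_pos.2 hbc
    field_simp; ring
  rw [hsum]
  exact div_nonneg (by linarith)
    (mul_pos (mul_pos (mul_pos two_pos (sub_pos.2 hab)) (sub_pos.2 hbc)) hbz).le

lemma IsCurvGeRegion.infDist_sub_infDist_le (hU : IsCurvGeRegion U) {γ : ℝ → X} {T : ℝ}
    (hγ : IsUnitSpeedGeodesicOn γ T) {s h t : ℝ} (hh : 0 < h) (hhs : h ≤ s) (ht : 0 < t)
    (hstT : s + t ≤ T)
    (hγU : ∀ r ∈ Icc (s - h) (s + t), γ r ∈ U) {σ : ℝ → X} {K : Set X}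
    (hσ : IsGeodesicToSet σ (γ s) K) {u : ℝ} (hu : 0 < u) (huL : u ≤ infDist (γ s) K)
    (hσU : σ u ∈ U) :
    infDist (γ (s - h)) K - infDist (γ s) K ≤
      h * (cos (compAngle (γ s) (γ (s + t)) (σ u)) + h / u) := by
  have hdist : dist (γ s) (γ (s - h)) = h := by
    rw [dist_comm, hγ.dist_eq_sub (by linarith) (by linarith) (by linarith), sub_sub_cancel]
  have hcos := hU.cos_compAngle_add_cos_compAngle_nonneg hγ (by linarith) (sub_lt_self s hh)
    (lt_add_of_pos_right s ht) hstT hγU hσU ((hσ.dist_eq hu.le huL).symm ▸ hu)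
  have hslope := hσ.infDist_sub_infDist_le hu huL (hdist ▸ hh)
  rw [hdist] at hslope
  have hexpand : h * (cos (compAngle (γ s) (γ (s + t)) (σ u)) + h / u) =
      h * cos (compAngle (γ s) (γ (s + t)) (σ u)) + h ^ 2 / u := by ring
  nlinarith [mul_nonneg hh.le hcos]

end Curvature

section LowerBound

variable {X : Type*} [MetricSpace X] {U K : Set X} {γ : ℝ → X} {T : ℝ}

/-- Otherwise a limit of the `σ s` along an ultrafilter would be a shortest path from `γ 0` to `K`
making an upper angle `≤ c` with `γ`. -/
lemma eventually_exists_lt_compAngle [ProperSpace X] (hK : IsClosed K)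
    (hγ : IsUnitSpeedGeodesicOn γ T) {σ : ℝ → ℝ → X} (hσ : ∀ s, IsGeodesicToSet (σ s) (γ s) K)
    {ρ : ℝ} (hρ : 0 < ρ) (hρT : ρ ≤ T)
    (hρL : ρ ≤ infDist (γ 0) K) {c : ℝ}
    (hc : ∀ τ, IsGeodesicToSet τ (γ 0) K → c < upperAngle γ τ) :
    ∀ᶠ s in 𝓝[>] 0, ∃ t ∈ Ioo 0 ρ, ∃ u ∈ Ioo 0 ρ, c < compAngle (γ s) (γ (s + t)) (σ s u) := by
  rw [Filter.Eventually, mem_iff_ultrafilter]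
  intro F hF
  by_contra hnot
  have hbad : ∀ᶠ s in (F : Filter ℝ), ∀ t ∈ Ioo 0 ρ, ∀ u ∈ Ioo 0 ρ,
      compAngle (γ s) (γ (s + t)) (σ s u) ≤ c := by
    filter_upwards [Ultrafilter.compl_mem_iff_notMem.2 hnot] with s hs t ht u hu
    exact not_lt.1 fun h => hs ⟨t, ht, u, hu, h⟩
  have hγs : Tendsto γ F (𝓝 (γ 0)) := by
    simpa using (hγ.tendsto_add_nhdsGT le_rfl (hρ.trans_le hρT)).mono_left hF
  have hσs : Tendsto (fun s => σ s 0) F (𝓝 (γ 0)) := by simpa [(hσ _).2.1] using hγs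
  have hlen : Tendsto (fun s => infDist (γ s) K) F (𝓝 (infDist (γ 0) K)) :=
    ((continuous_infDist_pt K).tendsto _).comp hγs
  obtain ⟨τ, hτ, hτlim⟩ := exists_isUnitSpeedGeodesicOn_tendsto F (fun s => (hσ s).1)
    (fun _ => infDist_nonneg) hlen hσs
  have hτ0 : τ 0 = γ 0 := tendsto_nhds_unique (hτlim 0 ⟨le_rfl, infDist_nonneg⟩ (fun _ => 0)
    (.of_forall fun _ => ⟨le_rfl, infDist_nonneg⟩) tendsto_const_nhds) hσs
  have hτK : τ (infDist (γ 0) K) ∈ K :=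
    hK.mem_of_tendsto (hτlim _ ⟨infDist_nonneg, le_rfl⟩ _
      (.of_forall fun _ => ⟨infDist_nonneg, le_rfl⟩) hlen) (.of_forall fun s => (hσ s).2.2)
  refine (hc τ ⟨hτ, hτ0, hτK⟩).not_ge (upperAngle_le_of_forall_compAngle_le hρ fun t ht u hu => ?_)
  have huL : u < infDist (γ 0) K := hu.2.trans_le hρL
  have hu_len : ∀ᶠ s in (F : Filter ℝ), u ∈ Icc 0 (infDist (γ s) K) :=
    (hlen.eventually (eventually_ge_nhds huL)).mono fun _ hs => ⟨hu.1.le, hs⟩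
  have hlimit := hγs.compAngle ((hγ.tendsto_add_nhdsGT ht.1.le (ht.2.trans_le hρT)).mono_left hF)
    (hτlim u ⟨hu.1.le, huL.le⟩ (fun _ => u) hu_len tendsto_const_nhds)
    (by rw [hγ.dist_zero_eq ht.1.le (ht.2.trans_le hρT).le]; exact ht.1.ne')
    (by rw [← hτ0, hτ.dist_zero_eq hu.1.le huL.le]; exact hu.1.ne')
  exact le_of_tendsto hlimit (hbad.mono fun s hs => hs t ht u hu)

lemma IsCurvGeRegion.eventually_infDist_sub_infDist_le (hU : IsCurvGeRegion U)
    (hγ : IsUnitSpeedGeodesicOn γ T) {R : ℝ} (hRU : closedBall (γ 0) R ⊆ U) {s t u : ℝ}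
    (hs : 0 < s) (ht : 0 < t) (hu : 0 < u) (hstT : s + t ≤ T) (hstR : s + t ≤ R)
    (hsuR : s + u ≤ R) {σ : ℝ → X} (hσ : IsGeodesicToSet σ (γ s) K) (huL : u ≤ infDist (γ s) K)
    {C : ℝ} (hC : cos (compAngle (γ s) (γ (s + t)) (σ u)) < C) :
    ∀ᶠ h in 𝓝[>] 0, infDist (γ (s - h)) K - infDist (γ s) K ≤ C * h := by
  have hγU : ∀ r ∈ Icc 0 (s + t), γ r ∈ U := fun r hr => hRU <| by
    rw [mem_closedBall, dist_comm, hγ.dist_zero_eq hr.1 (hr.2.trans hstT)]; linarith [hr.2]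
  have hσU : σ u ∈ U := hRU <| by
    rw [mem_closedBall]
    calc dist (σ u) (γ 0) ≤ dist (σ u) (γ s) + dist (γ s) (γ 0) := dist_triangle _ _ _
      _ = u + s := by
        rw [dist_comm, hσ.dist_eq hu.le huL, dist_comm, hγ.dist_zero_eq hs.le (by linarith)]
      _ ≤ R := by linarith
  filter_upwards [Ioo_mem_nhdsGT (lt_min hs (mul_pos (sub_pos.2 hC) hu))] with h hh
  have hhs : h < s := hh.2.trans_le (min_le_left _ _)
  have hhu : h / u < C - cos (compAngle (γ s) (γ (s + t)) (σ u)) := by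
    rw [div_lt_iff₀ hu]; exact hh.2.trans_le (min_le_right _ _)
  calc infDist (γ (s - h)) K - infDist (γ s) K
      ≤ h * (cos (compAngle (γ s) (γ (s + t)) (σ u)) + h / u) :=
        hU.infDist_sub_infDist_le hγ hh.1 hhs.le ht hstT
          (fun r hr => hγU r ⟨by linarith [hr.1], hr.2⟩) hσ hu huL hσU
    _ ≤ C * h := by nlinarith [hh.1]

lemma IsCurvGeRegion.eventually_lt_slope_of_lt_neg_cos_minUpperAngle [ProperSpace X]
    (hU : IsCurvGeRegion U) (hUγ : U ∈ 𝓝 (γ 0)) (hγ : IsUnitSpeedGeodesicOn γ T) (hT : 0 < T)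
    (hK : IsClosed K) (hL : 0 < infDist (γ 0) K) {σ : ℝ → ℝ → X}
    (hσ : ∀ s, IsGeodesicToSet (σ s) (γ s) K) {a : ℝ} (ha : a < -cos (minUpperAngle γ K)) :
    ∀ᶠ t in 𝓝[>] 0, a < (infDist (γ t) K - infDist (γ 0) K) / t := by
  set m := minUpperAngle γ K
  set ε := (-cos m - a) / 4
  have hε : 0 < ε := by simp only [ε]; linarith
  have hεa : a = -cos m - 4 * ε := by simp only [ε]; ring
  obtain ⟨R, hR, hRU⟩ := nhds_basis_closedBall.mem_iff.1 hUγ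
  set ρ := min (min (R / 2) (T / 2)) (infDist (γ 0) K / 2)
  have hρ : 0 < ρ := lt_min (lt_min (half_pos hR) (half_pos hT)) (half_pos hL)
  have hρR : ρ ≤ R / 2 := (min_le_left _ _).trans (min_le_left _ _)
  have hρT : ρ ≤ T / 2 := (min_le_left _ _).trans (min_le_right _ _)
  have hρL : ρ ≤ infDist (γ 0) K / 2 := min_le_right _ _
  obtain ⟨δ, hδ, hδsub⟩ := mem_nhdsGT_iff_exists_Ioo_subset.1 <|
    eventually_exists_lt_compAngle hK hγ hσ hρ (by linarith) (by linarith) (c := m - ε)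
      fun τ hτ => by linarith [minUpperAngle_le_upperAngle hτ]
  have hback : ∀ s ∈ Ioo 0 (min δ ρ), ∀ᶠ h in 𝓝[>] 0,
      infDist (γ (s - h)) K - infDist (γ s) K ≤ (cos m + 2 * ε) * h := by
    intro s hs
    have hsρ : s < ρ := hs.2.trans_le (min_le_right _ _)
    obtain ⟨t, ht, u, hu, hθ⟩ := hδsub ⟨hs.1, hs.2.trans_le (min_le_left _ _)⟩
    have huL : u ≤ infDist (γ s) K := by
      linarith [infDist_le_infDist_add_dist (s := K) (x := γ 0) (y := γ s),
        hγ.dist_zero_eq hs.1.le (by linarith), hu.2]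
    have hcos := cos_sub_le_cos_of_le_add (minUpperAngle_nonneg γ K) (compAngle_le_pi _ _ _)
      hε.le (by linarith : m ≤ compAngle (γ s) (γ (s + t)) (σ s u) + ε)
    exact hU.eventually_infDist_sub_infDist_le hγ hRU hs.1 ht.1 hu.1 (by linarith [ht.2])
      (by linarith [ht.2]) (by linarith [hu.2]) (hσ s) huL (by linarith)
  filter_upwards [Ioo_mem_nhdsGT (lt_min hδ hρ)] with s₀ hs₀
  have hs₀T : s₀ ≤ T := by linarith [hs₀.2.trans_le (min_le_right _ _)]
  have hint := sub_le_mul_of_forall_eventually_sub_le hs₀.1.le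
    ((continuous_infDist_pt K).comp_continuousOn
      (hγ.continuousOn.mono (Icc_subset_Icc le_rfl hs₀T)))
    fun s hs => by simpa using hback s ⟨hs.1, hs.2.trans_lt hs₀.2⟩
  rw [lt_div_iff₀ hs₀.1]
  simp only [Function.comp, sub_zero] at hint
  rw [hεa]
  nlinarith [mul_pos hε hs₀.1]

end LowerBound

/-- Theorem 4.4, curvature `≥ 0` case: the first variation formula for the
distance to a compact set. -/
theorem first_variation_compact_set_of_curvGe {X : Type*} [MetricSpace X]
    [ProperSpace X]
    (hgeo : ∀ x y : X, ∃ γ : ℝ → X, IsUnitSpeedGeodesicOn γ (dist x y) ∧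
      γ 0 = x ∧ γ (dist x y) = y)
    (hcurv : ∀ p : X, ∃ U ∈ 𝓝 p, IsCurvGeRegion U)
    {K : Set X} (hK : IsCompact K) (hKne : K.Nonempty)
    {T : ℝ} (hT : 0 < T)
    (γ : ℝ → X) (hγ : IsUnitSpeedGeodesicOn γ T) (hγ0 : γ 0 ∉ K) :
    Filter.Tendsto
      (fun t : ℝ => (Metric.infDist (γ t) K - Metric.infDist (γ 0) K) / t)
      (𝓝[>] (0:ℝ))
      (𝓝 (-Real.cos (sInf {a : ℝ | ∃ σ : ℝ → X,
        IsUnitSpeedGeodesicOn σ (Metric.infDist (γ 0) K) ∧ σ 0 = γ 0 ∧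
        σ (Metric.infDist (γ 0) K) ∈ K ∧ a = upperAngle γ σ}))) := by
  have hangles : {a : ℝ | ∃ σ : ℝ → X, IsUnitSpeedGeodesicOn σ (infDist (γ 0) K) ∧ σ 0 = γ 0 ∧
      σ (infDist (γ 0) K) ∈ K ∧ a = upperAngle γ σ} =
      upperAngle γ '' {σ | IsGeodesicToSet σ (γ 0) K} := by
    ext; simp [IsGeodesicToSet, and_assoc, eq_comm]
  rw [hangles]
  change Tendsto _ _ (𝓝 (-cos (minUpperAngle γ K)))
  have hL : 0 < infDist (γ 0) K := (hK.isClosed.notMem_iff_infDist_pos hKne).1 hγ0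
  choose σ hσ using fun s => exists_isGeodesicToSet hgeo hK hKne (γ s)
  obtain ⟨U, hUγ, hU⟩ := hcurv (γ 0)
  exact tendsto_order.2
    ⟨fun a ha =>
      hU.eventually_lt_slope_of_lt_neg_cos_minUpperAngle hUγ hγ hT hK.isClosed hL hσ ha,
      fun b hb => eventually_slope_lt_of_neg_cos_minUpperAngle_lt hγ hT hL ⟨σ 0, hσ 0⟩ hb⟩
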